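/- Let R ∈ 𝔯(V) be such that R* ∈ 𝔯(V) as well. Then: (1) R is equiaffine if and only if R* is equiaffine, i.e., Ric(R) is symmetric if and only if Ric(R*) is symmetric; (2) if moreover Ric(R) is symmetric, then π₃(R) = 0, π₄(R) = 0 and π₈(R) = 0, so that R = π₁(R) + (π₂(R) + π₅(R)) + (π₆(R) + π₇(R)). -/

import Mathlib

/-! Contracting the first Bianchi identity over its first and last slots shows that the skew
part of `Ric(R)` is minus the trace of `R` over its last two slots. Conjugation flips the sign of
that trace and `Ric(R*) = Ric*(R)`, so when `R* ∈ 𝔯(V)` as well, `Λ Ric* = -Λ Ric`: one Ricci form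
is symmetric iff the other is. In that case every `Λ`-term in `π₃, π₄, π₈` vanishes. The Bianchi
identities of `R` and `R*` give `R = ψ(R) + μ(R)`, which kills `π₈`, and the remaining projections
add up to `ψ(R) + μ(R)` because the coefficients of `τ g∧g`, `Ric∧g` and `Ric*∧g` cancel. -/

open scoped BigOperators
open Pointwise

namespace GCT

variable {V : Type*} [AddCommGroup V] [Module ℝ V]

/-- Linearity of a real valued function of one vector variable. -/
def IsLin (f : V → ℝ) : Prop :=
  (∀ x y : V, f (x + y) = f x + f y) ∧ (∀ (c : ℝ) (x : V), f (c • x) = c * f x)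

/-- Bilinearity. -/
def IsBilin (h : V → V → ℝ) : Prop :=
  (∀ y, IsLin (fun x => h x y)) ∧ (∀ x, IsLin (fun y => h x y))

/-- 4-linearity. -/
def IsMulti4 (F : V → V → V → V → ℝ) : Prop :=
  (∀ y z w, IsLin (fun x => F x y z w)) ∧ (∀ x z w, IsLin (fun y => F x y z w)) ∧
    (∀ x y w, IsLin (fun z => F x y z w)) ∧ (∀ x y z, IsLin (fun w => F x y z w))

/-- The space 𝔯(V) of generalized curvature tensors. -/
def rSet (V : Type*) [AddCommGroup V] [Module ℝ V] : Set (V → V → V → V → ℝ) :=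
  {F | IsMulti4 F ∧ (∀ x y z w, F x y z w = - F y x z w) ∧
    (∀ x y z w, F x y z w + F y z x w + F z x y w = 0)}

/-- The space 𝔞(V) of algebraic curvature tensors. -/
def aSet (V : Type*) [AddCommGroup V] [Module ℝ V] : Set (V → V → V → V → ℝ) :=
  {F | F ∈ rSet V ∧ ∀ x y z w, F x y z w = - F x y w z}

/-- The space 𝔰(V). -/
def sSet (V : Type*) [AddCommGroup V] [Module ℝ V] : Set (V → V → V → V → ℝ) :=
  {F | F ∈ rSet V ∧ ∀ x y z w, F x y z w = F x y w z}

/-- The conjugate tensor R*. -/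
def conj (F : V → V → V → V → ℝ) : V → V → V → V → ℝ := fun x y z w => - F x y w z

/-- The product h·k of two bilinear forms. -/
def prodB (h k : V → V → ℝ) : V → V → V → V → ℝ := fun x y z w => h x y * k z w

/-- The wedge product h ∧_t k of two bilinear forms. -/
def wedge (t : ℝ) (h k : V → V → ℝ) : V → V → V → V → ℝ :=
  fun x y z w => h x z * k y w - h y z * k x w - t * (h x w * k y z - h y w * k x z)

/-- Antisymmetric part Λh. -/
noncomputable def lamB (h : V → V → ℝ) : V → V → ℝ := fun x y => (h x y - h y x) / 2

/-- Symmetric part Sh. -/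
noncomputable def symB (h : V → V → ℝ) : V → V → ℝ := fun x y => (h x y + h y x) / 2

/-- The idempotent ψ. -/
noncomputable def psi (F : V → V → V → V → ℝ) : V → V → V → V → ℝ :=
  fun x y z w => (F x y z w + F y x w z + F z w x y + F w z y x) / 4

/-- The idempotent μ. -/
noncomputable def mu (F : V → V → V → V → ℝ) : V → V → V → V → ℝ :=
  fun x y z w =>
    (3 * F x y z w + 3 * F x y w z + F x w z y + F x z w y + F w y z x + F z y w x) / 8

/-- A linear equivalence is a g-isometry. -/
def IsIsometry (g : V → V → ℝ) (φ : V ≃ₗ[ℝ] V) : Prop := ∀ x y, g (φ x) (φ y) = g x y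

/-- Pull back of a 4-tensor along a linear equivalence (the natural action). -/
def pullT (φ : V ≃ₗ[ℝ] V) (F : V → V → V → V → ℝ) : V → V → V → V → ℝ :=
  fun x y z w => F (φ x) (φ y) (φ z) (φ w)

/-- Invariance of a set of 4-tensors under the orthogonal group O(V,g). -/
def OInv (g : V → V → ℝ) (S : Set (V → V → V → V → ℝ)) : Prop :=
  ∀ φ : V ≃ₗ[ℝ] V, IsIsometry g φ → ∀ F ∈ S, pullT φ F ∈ S

/-- Irreducibility of a subspace of 4-tensors as an O(V,g)-module:
there is no proper nonzero invariant subspace. -/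
def OIrred (g : V → V → ℝ) (W : Set (V → V → V → V → ℝ)) : Prop :=
  ∀ U : Submodule ℝ (V → V → V → V → ℝ), (U : Set (V → V → V → V → ℝ)) ⊆ W →
    (∀ φ : V ≃ₗ[ℝ] V, IsIsometry g φ → ∀ F ∈ U, pullT φ F ∈ U) →
    (U : Set (V → V → V → V → ℝ)) = {0} ∨ (U : Set (V → V → V → V → ℝ)) = W

/-- Isomorphism of two invariant subspaces as O(V,g)-modules. -/
def OEquivMod (g : V → V → ℝ) (S T : Set (V → V → V → V → ℝ)) : Prop :=
  ∃ e : (V → V → V → V → ℝ) →ₗ[ℝ] (V → V → V → V → ℝ),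
    Set.BijOn e S T ∧
      ∀ φ : V ≃ₗ[ℝ] V, IsIsometry g φ → ∀ F ∈ S, e (pullT φ F) = pullT φ (e F)

variable (n : ℕ) (b : Module.Basis (Fin n) ℝ V) (g : V → V → ℝ)

/-- Inverse metric components g^{ij}. -/
noncomputable def ginv : Matrix (Fin n) (Fin n) ℝ :=
  (Matrix.of fun i j => g (b i) (b j))⁻¹

/-- Ric(R)(x,y) := Σ g^{ij} R(e_i,x,y,e_j). -/
noncomputable def Ric (F : V → V → V → V → ℝ) : V → V → ℝ :=
  fun x y => ∑ i, ∑ j, ginv n b g i j * F (b i) x y (b j)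

/-- Ric*(R)(x,y) := Σ g^{ij} R(x,e_i,e_j,y). -/
noncomputable def RicS (F : V → V → V → V → ℝ) : V → V → ℝ :=
  fun x y => ∑ i, ∑ j, ginv n b g i j * F x (b i) (b j) y

/-- The generalized scalar curvature τ(R). -/
noncomputable def tau (F : V → V → V → V → ℝ) : ℝ :=
  ∑ i, ∑ j, ∑ k, ∑ l, ginv n b g i l * ginv n b g j k * F (b i) (b j) (b k) (b l)

/-- The g-trace of a bilinear form. -/
noncomputable def trg (h : V → V → ℝ) : ℝ := ∑ i, ∑ j, ginv n b g i j * h (b i) (b j)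

/-- The scalar product on 4-tensors given by full contraction with g. -/
noncomputable def inner4 (F T : V → V → V → V → ℝ) : ℝ :=
  ∑ i, ∑ j, ∑ k, ∑ l, ∑ i', ∑ j', ∑ k', ∑ l',
    ginv n b g i i' * ginv n b g j j' * ginv n b g k k' * ginv n b g l l' *
      F (b i) (b j) (b k) (b l) * T (b i') (b j') (b k') (b l')

/-- W-projection π₁. -/
noncomputable def pi1 (F : V → V → V → V → ℝ) : V → V → V → V → ℝ :=
  (-(tau n b g F) / ((n : ℝ) * ((n : ℝ) - 1))) • wedge 0 g g

/-- W-projection π₂. -/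
noncomputable def pi2 (F : V → V → V → V → ℝ) : V → V → V → V → ℝ :=
  ((1 : ℝ) / ((n : ℝ) - 1)) • wedge 0 (((tau n b g F) / (n : ℝ)) • g - symB (Ric n b g F)) g

/-- W-projection π₃. -/
noncomputable def pi3 (F : V → V → V → V → ℝ) : V → V → V → V → ℝ :=
  ((-1 : ℝ) / ((n : ℝ) + 1)) •
    ((2 : ℝ) • prodB (lamB (Ric n b g F)) g + wedge 0 (lamB (Ric n b g F)) g)

/-- W-projection π₄. -/
noncomputable def pi4 (F : V → V → V → V → ℝ) : V → V → V → V → ℝ :=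
  ((-1 : ℝ) / ((n : ℝ) ^ 2 - 4)) •
      ((2 : ℝ) • prodB (lamB (RicS n b g F)) g + wedge ((n : ℝ) + 1) (lamB (RicS n b g F)) g)
    - ((3 : ℝ) / (((n : ℝ) ^ 2 - 4) * ((n : ℝ) + 1))) •
      ((2 : ℝ) • prodB (lamB (Ric n b g F)) g + wedge ((n : ℝ) + 1) (lamB (Ric n b g F)) g)

/-- W-projection π₅. -/
noncomputable def pi5 (F : V → V → V → V → ℝ) : V → V → V → V → ℝ :=
  ((1 : ℝ) / (((n : ℝ) - 1) * ((n : ℝ) - 2))) •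
    ((tau n b g F) • wedge 0 g g -
      ((1 : ℝ) / (n : ℝ)) •
        wedge ((n : ℝ) - 1) (symB (Ric n b g F + ((n : ℝ) - 1) • RicS n b g F)) g)

/-- W-projection π₆. -/
noncomputable def pi6 (F : V → V → V → V → ℝ) : V → V → V → V → ℝ :=
  psi F + ((1 : ℝ) / (2 * ((n : ℝ) - 2))) • wedge 1 (symB (Ric n b g F + RicS n b g F)) g
    - ((tau n b g F) / (((n : ℝ) - 1) * ((n : ℝ) - 2))) • wedge 0 g g

/-- W-projection π₇. -/
noncomputable def pi7 (F : V → V → V → V → ℝ) : V → V → V → V → ℝ :=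
  mu F + ((1 : ℝ) / (2 * (n : ℝ))) • wedge (-1) (symB (Ric n b g F - RicS n b g F)) g
    + ((1 : ℝ) / (2 * ((n : ℝ) + 2))) • prodB (lamB ((3 : ℝ) • Ric n b g F - RicS n b g F)) g
    + ((1 : ℝ) / (4 * ((n : ℝ) + 2))) • wedge (-1) (lamB ((3 : ℝ) • Ric n b g F - RicS n b g F)) g

/-- W-projection π₈. -/
noncomputable def pi8 (F : V → V → V → V → ℝ) : V → V → V → V → ℝ :=
  F - psi F - mu F
    + ((1 : ℝ) / (2 * ((n : ℝ) - 2))) • prodB (lamB (Ric n b g F + RicS n b g F)) g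
    + ((1 : ℝ) / (4 * ((n : ℝ) - 2))) • wedge 3 (lamB (Ric n b g F + RicS n b g F)) g

/-- A-projection α₁. -/
noncomputable def al1 (F : V → V → V → V → ℝ) : V → V → V → V → ℝ :=
  (-(tau n b g F) / ((n : ℝ) * ((n : ℝ) - 1))) • wedge 0 g g

/-- A-projection α₂. -/
noncomputable def al2 (F : V → V → V → V → ℝ) : V → V → V → V → ℝ :=
  ((-1 : ℝ) / (2 * ((n : ℝ) - 2))) • wedge 1 (symB (Ric n b g F + RicS n b g F)) g
    + ((2 * tau n b g F) / ((n : ℝ) * ((n : ℝ) - 2))) • wedge 0 g g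

/-- A-projection α₃. -/
noncomputable def al3 (F : V → V → V → V → ℝ) : V → V → V → V → ℝ :=
  ((-1 : ℝ) / (2 * (n : ℝ))) • wedge (-1) (symB (Ric n b g F - RicS n b g F)) g

/-- A-projection α₄. -/
noncomputable def al4 (F : V → V → V → V → ℝ) : V → V → V → V → ℝ :=
  ((-1 : ℝ) / (4 * ((n : ℝ) + 2))) •
    ((2 : ℝ) • prodB (lamB ((3 : ℝ) • Ric n b g F - RicS n b g F)) g
      + wedge (-1) (lamB ((3 : ℝ) • Ric n b g F - RicS n b g F)) g)

/-- A-projection α₅. -/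
noncomputable def al5 (F : V → V → V → V → ℝ) : V → V → V → V → ℝ :=
  ((-1 : ℝ) / (4 * ((n : ℝ) - 2))) •
    ((2 : ℝ) • prodB (lamB (Ric n b g F + RicS n b g F)) g
      + wedge 3 (lamB (Ric n b g F + RicS n b g F)) g)

/-- A-projection α₆. -/
noncomputable def al6 (F : V → V → V → V → ℝ) : V → V → V → V → ℝ :=
  psi F - al1 n b g F - al2 n b g F

/-- A-projection α₇. -/
noncomputable def al7 (F : V → V → V → V → ℝ) : V → V → V → V → ℝ :=
  mu F - al3 n b g F - al4 n b g F

/-- A-projection α₈. -/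
noncomputable def al8 (F : V → V → V → V → ℝ) : V → V → V → V → ℝ :=
  F - mu F - psi F - al5 n b g F

/-- Curvature tensors of constant curvature type. -/
noncomputable def uSet : Set (V → V → V → V → ℝ) :=
  {F | ∃ c : ℝ, ∀ x y z w, F x y z w = c * (g x w * g y z - g x z * g y w)}

/-- Ricci traceless algebraic curvature tensors built from a traceless symmetric form. -/
noncomputable def zSet : Set (V → V → V → V → ℝ) :=
  {F | ∃ Xi : V → V → ℝ, IsBilin Xi ∧ (∀ x y, Xi x y = Xi y x) ∧ trg n b g Xi = 0 ∧
    ∀ x y z w, F x y z w = Xi x w * g y z + g x w * Xi y z - Xi x z * g y w - g x z * Xi y w}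

/-- Weyl type (Ricci flat algebraic) curvature tensors. -/
noncomputable def wSet : Set (V → V → V → V → ℝ) :=
  {F | F ∈ aSet V ∧ Ric n b g F = fun _ _ => 0}

/-- The projective curvature tensor p(R). -/
noncomputable def pProj (F : V → V → V → V → ℝ) : V → V → V → V → ℝ :=
  F - pi1 n b g F - pi2 n b g F - pi3 n b g F

noncomputable def contr34 (F : V → V → V → V → ℝ) : V → V → ℝ :=
  fun x y => ∑ i, ∑ j, ginv n b g i j * F x y (b i) (b j)

variable {n b g}

theorem ginv_transpose (hgs : ∀ x y, g x y = g y x) : (ginv n b g).transpose = ginv n b g := by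
  have hG : (Matrix.of fun i j => g (b i) (b j)).transpose =
      Matrix.of fun i j => g (b i) (b j) := by
    ext i j
    exact hgs (b j) (b i)
  rw [ginv, Matrix.transpose_nonsing_inv, hG]

theorem ginv_comm (hgs : ∀ x y, g x y = g y x) (i j : Fin n) :
    ginv n b g i j = ginv n b g j i :=
  congr_fun₂ (ginv_transpose hgs) j i

theorem sum_ginv_mul_comm (hgs : ∀ x y, g x y = g y x) (H : Fin n → Fin n → ℝ) :
    ∑ i, ∑ j, ginv n b g i j * H i j = ∑ i, ∑ j, ginv n b g i j * H j i := by
  rw [Finset.sum_comm]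
  exact Finset.sum_congr rfl fun i _ => Finset.sum_congr rfl fun j _ => by
    rw [ginv_comm hgs j i]

theorem sum_ginv_mul_eq_zero_of_antisymm (hgs : ∀ x y, g x y = g y x)
    {H : Fin n → Fin n → ℝ} (hH : ∀ i j, H i j = -H j i) :
    ∑ i, ∑ j, ginv n b g i j * H i j = 0 := by
  have h : ∑ i, ∑ j, ginv n b g i j * H i j = -∑ i, ∑ j, ginv n b g i j * H i j := by
    conv_lhs => rw [sum_ginv_mul_comm hgs]
    simp only [← Finset.sum_neg_distrib, ← mul_neg, ← hH]
  linarith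

theorem contr34_conj (hgs : ∀ x y, g x y = g y x) (F : V → V → V → V → ℝ) (x y : V) :
    contr34 n b g (conj F) x y = -contr34 n b g F x y := by
  rw [contr34, contr34, sum_ginv_mul_comm hgs]
  simp only [conj, mul_neg, Finset.sum_neg_distrib]

theorem Ric_sub_Ric_swap {F : V → V → V → V → ℝ} (hF : F ∈ rSet V) (x y : V) :
    Ric n b g F x y - Ric n b g F y x = -contr34 n b g F x y := by
  obtain ⟨-, hFa, hFb⟩ := hF
  simp only [Ric, contr34, ← Finset.sum_sub_distrib, ← Finset.sum_neg_distrib]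
  refine Finset.sum_congr rfl fun i _ => Finset.sum_congr rfl fun j _ => ?_
  linear_combination ginv n b g i j * (hFb (b i) x y (b j) - hFa y (b i) x (b j))

theorem Ric_conj (hgs : ∀ x y, g x y = g y x) {F : V → V → V → V → ℝ}
    (hF : F ∈ rSet V) (x y : V) : Ric n b g (conj F) x y = RicS n b g F x y := by
  obtain ⟨-, hFa, hFb⟩ := hF
  have hvanish : ∑ i, ∑ j, ginv n b g i j * F (b j) (b i) x y = 0 :=
    sum_ginv_mul_eq_zero_of_antisymm hgs fun i j => hFa (b j) (b i) x y
  rw [RicS, sum_ginv_mul_comm hgs, ← sub_zero (Ric n b g (conj F) x y), ← hvanish, Ric,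
    ← Finset.sum_sub_distrib]
  refine Finset.sum_congr rfl fun i _ => ?_
  rw [← Finset.sum_sub_distrib]
  refine Finset.sum_congr rfl fun j _ => ?_
  simp only [conj]
  linear_combination -ginv n b g i j * hFb (b i) x (b j) y

theorem RicS_sub_RicS_swap (hgs : ∀ x y, g x y = g y x) {F : V → V → V → V → ℝ}
    (hF : F ∈ rSet V) (hFc : conj F ∈ rSet V) (x y : V) :
    RicS n b g F x y - RicS n b g F y x = -(Ric n b g F x y - Ric n b g F y x) := by
  rw [← Ric_conj hgs hF, ← Ric_conj hgs hF, Ric_sub_Ric_swap hFc, contr34_conj hgs,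
    Ric_sub_Ric_swap hF]

section Symmetric

variable {W : Type*} {h : W → W → ℝ}

theorem lamB_eq_zero (hh : ∀ x y, h x y = h y x) : lamB h = 0 := by
  funext x y
  simp [lamB, hh x y]

theorem symB_eq_self (hh : ∀ x y, h x y = h y x) : symB h = h := by
  funext x y
  simp only [symB, hh y x, add_self_div_two]

theorem prodB_zero_left (k : W → W → ℝ) : prodB (0 : W → W → ℝ) k = 0 := by
  funext x y z w
  simp [prodB]

theorem wedge_zero_left (t : ℝ) (k : W → W → ℝ) : wedge t (0 : W → W → ℝ) k = 0 := by
  funext x y z w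
  simp [wedge]

end Symmetric

theorem psi_add_mu_eq_self {F : V → V → V → V → ℝ} (hF : F ∈ rSet V)
    (hFc : conj F ∈ rSet V) : psi F + mu F = F := by
  obtain ⟨-, hFa, hFb⟩ := hF
  obtain ⟨-, -, hFcb⟩ := hFc
  have hFb' : ∀ x y z w : V, F x y w z + F y z w x + F z x w y = 0 := fun x y z w => by
    simp only [conj] at hFcb
    linear_combination -hFcb x y z w
  funext x y z w
  simp only [Pi.add_apply, psi, mu]
  linear_combination (-3/8 : ℝ) * hFa x y z w + (1/4 : ℝ) * hFb' x y z w
    + (1/8 : ℝ) * hFa x y w z - (1/4 : ℝ) * hFa x z y w + (1/8 : ℝ) * hFb' x z y w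
    - (1/4 : ℝ) * hFa x z w y + (1/4 : ℝ) * hFb x z w y + (1/4 : ℝ) * hFb' x z w y
    - (1/4 : ℝ) * hFa x w y z + (3/8 : ℝ) * hFb' x w y z - (1/4 : ℝ) * hFa x w z y
    + (1/4 : ℝ) * hFb' x w z y - (1/4 : ℝ) * hFb y z w x

section Equiaffine

variable {F : V → V → V → V → ℝ}

theorem pi3_eq_zero (hRic : ∀ x y, Ric n b g F x y = Ric n b g F y x) : pi3 n b g F = 0 := by
  rw [pi3, lamB_eq_zero hRic, prodB_zero_left, wedge_zero_left, smul_zero, add_zero, smul_zero]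

theorem pi4_eq_zero (hRic : ∀ x y, Ric n b g F x y = Ric n b g F y x)
    (hRicS : ∀ x y, RicS n b g F x y = RicS n b g F y x) : pi4 n b g F = 0 := by
  simp only [pi4, lamB_eq_zero hRic, lamB_eq_zero hRicS, prodB_zero_left, wedge_zero_left,
    smul_zero, add_zero, sub_zero]

theorem pi8_eq_zero (hF : F ∈ rSet V) (hFc : conj F ∈ rSet V)
    (hRic : ∀ x y, Ric n b g F x y = Ric n b g F y x)
    (hRicS : ∀ x y, RicS n b g F x y = RicS n b g F y x) : pi8 n b g F = 0 := by
  have hsum : lamB (Ric n b g F + RicS n b g F) = 0 :=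
    lamB_eq_zero fun x y => by simp only [Pi.add_apply, hRic x y, hRicS x y]
  rw [pi8, hsum, prodB_zero_left, wedge_zero_left, smul_zero, smul_zero, add_zero, add_zero,
    sub_sub, psi_add_mu_eq_self hF hFc, sub_self]

theorem pi_sum_eq_psi_add_mu (hn : 3 ≤ n)
    (hRic : ∀ x y, Ric n b g F x y = Ric n b g F y x)
    (hRicS : ∀ x y, RicS n b g F x y = RicS n b g F y x) :
    pi1 n b g F + (pi2 n b g F + pi5 n b g F) + (pi6 n b g F + pi7 n b g F) = psi F + mu F := by
  have hn' : (3 : ℝ) ≤ n := by exact_mod_cast hn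
  have hn0 : (n : ℝ) ≠ 0 := by linarith
  have hn1 : (n : ℝ) - 1 ≠ 0 := by linarith
  have hn2 : (n : ℝ) - 2 ≠ 0 := by linarith
  rw [pi1, pi2, pi5, pi6, pi7]
  set ρ := Ric n b g F
  set ρs := RicS n b g F
  have hlam : lamB ((3 : ℝ) • ρ - ρs) = 0 :=
    lamB_eq_zero fun x y => by simp only [Pi.sub_apply, Pi.smul_apply, hRic x y, hRicS x y]
  have hsym (c d : ℝ) : symB (c • ρ + d • ρs) = c • ρ + d • ρs :=
    symB_eq_self fun x y => by simp only [Pi.add_apply, Pi.smul_apply, hRic x y, hRicS x y]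
  have h1 := hsym 1 0
  have h2 := hsym 1 1
  have h3 := hsym 1 (-1)
  have h4 := hsym 1 ((n : ℝ) - 1)
  simp only [one_smul, zero_smul, add_zero, neg_one_smul, ← sub_eq_add_neg] at h1 h2 h3 h4
  rw [h1, h2, h3, h4, hlam, prodB_zero_left, wedge_zero_left]
  funext x y z w
  simp only [Pi.add_apply, Pi.sub_apply, Pi.smul_apply, smul_eq_mul, wedge, Pi.zero_apply]
  field_simp
  ring

end Equiaffine

theorem stmt5_general {V : Type*} [AddCommGroup V] [Module ℝ V]
    (n : ℕ) (hn : 3 ≤ n) (b : Module.Basis (Fin n) ℝ V)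
    (g : V → V → ℝ) (hgs : ∀ x y, g x y = g y x) :
    ∀ F ∈ rSet V, conj F ∈ rSet V →
      ((∀ x y, Ric n b g F x y = Ric n b g F y x) ↔
        (∀ x y, Ric n b g (conj F) x y = Ric n b g (conj F) y x)) ∧
      ((∀ x y, Ric n b g F x y = Ric n b g F y x) →
        pi3 n b g F = 0 ∧ pi4 n b g F = 0 ∧ pi8 n b g F = 0 ∧
        F = pi1 n b g F + (pi2 n b g F + pi5 n b g F) + (pi6 n b g F + pi7 n b g F)) := by
  intro F hF hFc
  have hskew := RicS_sub_RicS_swap (b := b) hgs hF hFc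
  have hRicS_symm : (∀ x y, Ric n b g F x y = Ric n b g F y x) →
      ∀ x y, RicS n b g F x y = RicS n b g F y x := fun hRic x y => by
    linarith [hskew x y, hRic x y]
  refine ⟨?_, fun hRic => ?_⟩
  · simp only [Ric_conj hgs hF]
    exact ⟨hRicS_symm, fun hRicS x y => by linarith [hskew x y, hRicS x y]⟩
  · have hRicS := hRicS_symm hRic
    refine ⟨pi3_eq_zero hRic, pi4_eq_zero hRic hRicS, pi8_eq_zero hF hFc hRic hRicS, ?_⟩
    rw [pi_sum_eq_psi_add_mu hn hRic hRicS, psi_add_mu_eq_self hF hFc]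

theorem stmt5 {V : Type*} [AddCommGroup V] [Module ℝ V]
    (n : ℕ) (hn : 3 ≤ n) (b : Module.Basis (Fin n) ℝ V)
    (g : V → V → ℝ) (hgb : IsBilin g) (hgs : ∀ x y, g x y = g y x)
    (hgnd : ∀ x : V, (∀ y : V, g x y = 0) → x = 0) :
    ∀ F ∈ rSet V, conj F ∈ rSet V →
      ((∀ x y, Ric n b g F x y = Ric n b g F y x) ↔
        (∀ x y, Ric n b g (conj F) x y = Ric n b g (conj F) y x)) ∧
      ((∀ x y, Ric n b g F x y = Ric n b g F y x) →
        pi3 n b g F = 0 ∧ pi4 n b g F = 0 ∧ pi8 n b g F = 0 ∧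
        F = pi1 n b g F + (pi2 n b g F + pi5 n b g F) + (pi6 n b g F + pi7 n b g F)) :=
  stmt5_general n hn b g hgs

end GCT
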